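/- arXiv:2505.11014 — 2 statements merged into one kernel-verified Lean document; each statement's English description precedes it below -/
import Mathlib

section
/- Let (Ω, 𝒜, P) be a probability space, X : Ω → 𝒳 a measurable map into a measurable space 𝒳, and 𝒢 = σ(X) the σ-algebra generated by X. Let T : Ω → ℝ be measurable with T ∈ {0,1} almost surely, let Y₀, Y₁ : Ω → ℝ be integrable with Y₀·T, Y₁·T integrable, and define the observed outcome Y = T·Y₁ + (1−T)·Y₀. Assume the pair (Y₀, Y₁) is conditionally independent of T given 𝒢, and that there exists ε > 0 with ε < E[T | 𝒢] < 1 − ε almost surely. Then the conditional average treatment effect is identified: almost surely, E[Y₁ − Y₀ | 𝒢] = E[Y·T | 𝒢]/E[T | 𝒢] − E[Y·(1−T) | 𝒢]/(1 − E[T | 𝒢]). -/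
/-!
Conditional independence given `m` means independence under the regular conditional
distribution `condExpKernel μ m a` for almost every `a`; integrating a product against that
kernel shows that conditional expectations of products of conditionally independent variables
factor. Since `T ∈ {0, 1}`, the observed outcome satisfies `Y T = Y₁ T` and
`Y (1 - T) = Y₀ (1 - T)`, so `E[Y T | X] = E[Y₁ | X] E[T | X]` and
`E[Y (1 - T) | X] = E[Y₀ | X] (1 - E[T | X])`; positivity lets us divide.
-/

open MeasureTheory ProbabilityTheory

abbrev sigmaGen {Ω 𝒳 : Type*} [MeasurableSpace 𝒳] (X : Ω → 𝒳) : MeasurableSpace Ω :=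
  MeasurableSpace.comap X inferInstance

namespace ProbabilityTheory

variable {Ω β β' : Type*} {m mΩ : MeasurableSpace Ω} [StandardBorelSpace Ω]
  {hm : m ≤ mΩ} {μ : Measure Ω} [IsFiniteMeasure μ]
  {mβ : MeasurableSpace β} {mβ' : MeasurableSpace β'}

lemma ae_ae_condExpKernel_of_ae {p : Ω → Prop} (h : ∀ᵐ ω ∂μ, p ω) :
    ∀ᵐ a ∂μ.trim hm, ∀ᵐ ω ∂condExpKernel μ m a, p ω := by
  refine Measure.ae_ae_of_ae_comp (κ := condExpKernel μ m) ?_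
  rwa [condExpKernel_comp_trim]

lemma CondIndepFun.congr {f f' : Ω → β} {g g' : Ω → β'} (hfg : CondIndepFun m hm f g μ)
    (hf : f =ᵐ[μ] f') (hg : g =ᵐ[μ] g') : CondIndepFun m hm f' g' μ :=
  Kernel.IndepFun.congr' hfg (ae_ae_condExpKernel_of_ae hf) (ae_ae_condExpKernel_of_ae hg)

lemma CondIndepFun.ae_indepFun_condExpKernel
    [MeasurableSpace.CountableOrCountablyGenerated Ω (β × β')]
    {f : Ω → β} {g : Ω → β'} (hf : Measurable f) (hg : Measurable g)
    (hfg : CondIndepFun m hm f g μ) :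
    ∀ᵐ a ∂μ.trim hm, IndepFun f g (condExpKernel μ m a) := by
  filter_upwards [(condIndepFun_iff_map_prod_eq_prod_map_map hf hg).1 hfg] with a ha
  rw [indepFun_iff_map_prod_eq_prod_map_map hf.aemeasurable hg.aemeasurable]
  simpa [Kernel.map_apply _ (hf.prodMk hg), Kernel.map_apply _ hf, Kernel.map_apply _ hg,
    Kernel.prod_apply] using ha

variable {𝕜 : Type*} [RCLike 𝕜]

lemma CondIndepFun.condExp_mul_of_measurable {f g : Ω → 𝕜} (hf : Measurable f)
    (hg : Measurable g) (hfg : CondIndepFun m hm f g μ) (hfi : Integrable f μ)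
    (hgi : Integrable g μ) (hfgi : Integrable (f * g) μ) :
    μ[f * g | m] =ᵐ[μ] μ[f | m] * μ[g | m] := by
  have hindep := ae_of_ae_trim hm (hfg.ae_indepFun_condExpKernel hf hg)
  filter_upwards [condExp_ae_eq_integral_condExpKernel hm hfgi,
    condExp_ae_eq_integral_condExpKernel hm hfi, condExp_ae_eq_integral_condExpKernel hm hgi,
    hindep] with ω hfg_eq hf_eq hg_eq hω
  rw [Pi.mul_apply, hfg_eq, hf_eq, hg_eq]
  exact hω.integral_mul_eq_mul_integral hf.aestronglyMeasurable hg.aestronglyMeasurable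

lemma CondIndepFun.condExp_mul {f g : Ω → 𝕜} (hfg : CondIndepFun m hm f g μ)
    (hfi : Integrable f μ) (hgi : Integrable g μ) (hfgi : Integrable (f * g) μ) :
    μ[f * g | m] =ᵐ[μ] μ[f | m] * μ[g | m] := by
  have hf := hfi.1.ae_eq_mk
  have hg := hgi.1.ae_eq_mk
  have hprod : f * g =ᵐ[μ] hfi.1.mk f * hgi.1.mk g := hf.mul hg
  calc μ[f * g | m] =ᵐ[μ] μ[hfi.1.mk f * hgi.1.mk g | m] := condExp_congr_ae hprod
    _ =ᵐ[μ] μ[hfi.1.mk f | m] * μ[hgi.1.mk g | m] :=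
      (hfg.congr hf hg).condExp_mul_of_measurable hfi.1.measurable_mk hgi.1.measurable_mk
        (hfi.congr hf) (hgi.congr hg) (hfgi.congr hprod)
    _ =ᵐ[μ] μ[f | m] * μ[g | m] := (condExp_congr_ae hf.symm).mul (condExp_congr_ae hg.symm)

end ProbabilityTheory

lemma MeasureTheory.condExp_one_sub {α : Type*} {m mα : MeasurableSpace α} {μ : Measure α}
    [IsFiniteMeasure μ] (hm : m ≤ mα) {f : α → ℝ} (hf : Integrable f μ) :
    μ[1 - f | m] =ᵐ[μ] 1 - μ[f | m] := by
  refine (condExp_sub (integrable_const 1) hf m).trans ?_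
  rw [Pi.one_def, condExp_const hm]

lemma ae_norm_le_one_of_ae_eq_zero_or_one {Ω : Type*} {mΩ : MeasurableSpace Ω}
    {μ : Measure Ω} {T : Ω → ℝ} (hT01 : ∀ᵐ ω ∂μ, T ω = 0 ∨ T ω = 1) :
    ∀ᵐ ω ∂μ, ‖T ω‖ ≤ 1 := by
  filter_upwards [hT01] with ω h
  rcases h with h | h <;> simp [h]

section PotentialOutcomes

variable {Ω : Type*} {m mΩ : MeasurableSpace Ω} [StandardBorelSpace Ω] {hm : m ≤ mΩ}
  {μ : Measure Ω} [IsFiniteMeasure μ] {T Y₀ Y₁ Y : Ω → ℝ}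

lemma condExp_observed_mul_treatment (hT : Measurable T) (hT01 : ∀ᵐ ω ∂μ, T ω = 0 ∨ T ω = 1)
    (hY₁ : Integrable Y₁ μ) (hY : ∀ ω, Y ω = T ω * Y₁ ω + (1 - T ω) * Y₀ ω)
    (hind : CondIndepFun m hm Y₁ T μ) :
    μ[fun ω => Y ω * T ω | m] =ᵐ[μ] μ[Y₁ | m] * μ[T | m] := by
  have hT_bdd := ae_norm_le_one_of_ae_eq_zero_or_one hT01
  have hobs : (fun ω => Y ω * T ω) =ᵐ[μ] Y₁ * T := by
    filter_upwards [hT01] with ω h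
    rcases h with h | h <;> simp [hY, h]
  exact (condExp_congr_ae hobs).trans <|
    hind.condExp_mul hY₁ (.of_bound hT.aestronglyMeasurable 1 hT_bdd)
      (hY₁.mul_bdd hT.aestronglyMeasurable hT_bdd)

/-- The control arm is the treatment arm for the treatment indicator `1 - T`. -/
lemma condExp_observed_mul_control (hT : Measurable T) (hT01 : ∀ᵐ ω ∂μ, T ω = 0 ∨ T ω = 1)
    (hY₀ : Integrable Y₀ μ) (hY : ∀ ω, Y ω = T ω * Y₁ ω + (1 - T ω) * Y₀ ω)
    (hind : CondIndepFun m hm Y₀ T μ) :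
    μ[fun ω => Y ω * (1 - T ω) | m] =ᵐ[μ] μ[Y₀ | m] * (1 - μ[T | m]) := by
  have hT' : Measurable (1 - T) := measurable_const.sub hT
  have hT'01 : ∀ᵐ ω ∂μ, (1 - T) ω = 0 ∨ (1 - T) ω = 1 := by
    filter_upwards [hT01] with ω h
    rcases h with h | h <;> simp [h]
  have hY' : ∀ ω, Y ω = (1 - T) ω * Y₀ ω + (1 - (1 - T) ω) * Y₁ ω := fun ω => by
    simp only [hY, Pi.sub_apply, Pi.one_apply]; ring
  have hTi : Integrable T μ :=
    .of_bound hT.aestronglyMeasurable 1 (ae_norm_le_one_of_ae_eq_zero_or_one hT01)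
  refine (condExp_observed_mul_treatment hT' hT'01 hY₀ hY'
    (hind.comp measurable_id (measurable_const.sub measurable_id))).trans ?_
  exact Filter.EventuallyEq.rfl.mul (condExp_one_sub hm hTi)

end PotentialOutcomes

theorem cate_identification_general
    {Ω 𝒳 : Type*} [MeasurableSpace Ω] [StandardBorelSpace Ω]
    [MeasurableSpace 𝒳]
    (P : Measure Ω) [IsProbabilityMeasure P]
    (X : Ω → 𝒳) (hX : Measurable X)
    (T Y₀ Y₁ : Ω → ℝ) (hT : Measurable T)
    (hT01 : ∀ᵐ ω ∂P, T ω = 0 ∨ T ω = 1)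
    (hY₀ : Integrable Y₀ P) (hY₁ : Integrable Y₁ P)
    (Y : Ω → ℝ) (hYdef : ∀ ω, Y ω = T ω * Y₁ ω + (1 - T ω) * Y₀ ω)
    (hindep : CondIndepFun (sigmaGen X) hX.comap_le (fun ω => (Y₀ ω, Y₁ ω)) T P)
    (ε : ℝ) (hε : 0 < ε)
    (hpos : ∀ᵐ ω ∂P, ε < (P[T | sigmaGen X]) ω ∧ (P[T | sigmaGen X]) ω < 1 - ε) :
    P[fun ω => Y₁ ω - Y₀ ω | sigmaGen X]
      =ᵐ[P] fun ω =>
        (P[fun ω' => Y ω' * T ω' | sigmaGen X]) ω / (P[T | sigmaGen X]) ω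
          - (P[fun ω' => Y ω' * (1 - T ω') | sigmaGen X]) ω
              / (1 - (P[T | sigmaGen X]) ω) := by
  have h₁ := condExp_observed_mul_treatment hT hT01 hY₁ hYdef
    (hindep.comp measurable_snd measurable_id)
  have h₀ := condExp_observed_mul_control hT hT01 hY₀ hYdef
    (hindep.comp measurable_fst measurable_id)
  have hsub : P[fun ω => Y₁ ω - Y₀ ω | sigmaGen X]
      =ᵐ[P] P[Y₁ | sigmaGen X] - P[Y₀ | sigmaGen X] := condExp_sub hY₁ hY₀ _
  filter_upwards [hsub, h₁, h₀, hpos] with ω hsub h₁ h₀ ⟨hlow, hup⟩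
  have hp : (P[T | sigmaGen X]) ω ≠ 0 := by linarith
  have hq : 1 - (P[T | sigmaGen X]) ω ≠ 0 := by linarith
  rw [hsub, h₁, h₀]
  simp only [Pi.sub_apply, Pi.mul_apply, Pi.one_apply]
  field_simp

/-- **Identification of the conditional average treatment effect.**
Under conditional ignorability of `(Y₀, Y₁)` and `T` given `σ(X)` and treatment positivity
`ε < E[T | σ(X)] < 1 - ε` a.s., with observed outcome `Y = T·Y₁ + (1-T)·Y₀`, the CATE is
identified: `E[Y₁ - Y₀ | σ(X)] = E[Y·T | σ(X)]/E[T | σ(X)] - E[Y·(1-T) | σ(X)]/(1 - E[T | σ(X)])`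
almost surely. -/
theorem cate_identification
    {Ω 𝒳 : Type*} [MeasurableSpace Ω] [StandardBorelSpace Ω] [Nonempty Ω]
    [MeasurableSpace 𝒳]
    (P : Measure Ω) [IsProbabilityMeasure P]
    (X : Ω → 𝒳) (hX : Measurable X)
    (T Y₀ Y₁ : Ω → ℝ) (hT : Measurable T)
    (hT01 : ∀ᵐ ω ∂P, T ω = 0 ∨ T ω = 1)
    (hY₀ : Integrable Y₀ P) (hY₁ : Integrable Y₁ P)
    (hY₀T : Integrable (fun ω => Y₀ ω * T ω) P)
    (hY₁T : Integrable (fun ω => Y₁ ω * T ω) P)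
    (Y : Ω → ℝ) (hYdef : ∀ ω, Y ω = T ω * Y₁ ω + (1 - T ω) * Y₀ ω)
    (hindep : CondIndepFun (sigmaGen X) hX.comap_le (fun ω => (Y₀ ω, Y₁ ω)) T P)
    (ε : ℝ) (hε : 0 < ε)
    (hpos : ∀ᵐ ω ∂P, ε < (P[T | sigmaGen X]) ω ∧ (P[T | sigmaGen X]) ω < 1 - ε) :
    P[fun ω => Y₁ ω - Y₀ ω | sigmaGen X]
      =ᵐ[P] fun ω =>
        (P[fun ω' => Y ω' * T ω' | sigmaGen X]) ω / (P[T | sigmaGen X]) ω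
          - (P[fun ω' => Y ω' * (1 - T ω') | sigmaGen X]) ω
              / (1 - (P[T | sigmaGen X]) ω) :=
  cate_identification_general P X hX T Y₀ Y₁ hT hT01 hY₀ hY₁ Y hYdef hindep ε hε hpos
end

section
/- Let (Ω, 𝒜, P) be a probability space, X : Ω → 𝒳 a measurable map into a measurable space 𝒳, 𝒢 = σ(X), and ℋ = σ(X, T) for a square-integrable random variable T. Suppose W = φ(X)·T + f(X) + δ with φ, f : 𝒳 → ℝ measurable, φ∘X bounded, f∘X and δ square-integrable, and E[δ | ℋ] = 0 almost surely. Let α⋆, α_mis : 𝒳 → ℝ be measurable with α⋆(x) ≠ 0 for all x, define the true treatment effect θ(x) = α⋆(x)·φ(x), and assume the conditional variance v := E[(T − E[T | 𝒢])² | 𝒢] is strictly positive almost surely. Then the population limit of the known-link estimator computed with the misspecified slope α_mis satisfies, almost surely: α_mis(X)·E[(W − E[W | 𝒢])·(T − E[T | 𝒢]) | 𝒢] / v − θ(X) = ((α_mis(X) − α⋆(X))/α⋆(X))·θ(X). That is, misspecifying the link slope induces the conditional bias B(X) = ((α_mis(X) − α⋆(X))/α⋆(X))·θ(X). -/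
open MeasureTheory ProbabilityTheory

/-- The σ-algebra generated jointly by `X` and `T`. -/
abbrev sigmaGen₂ {Ω 𝒳 : Type*} [MeasurableSpace 𝒳] (X : Ω → 𝒳) (T : Ω → ℝ) :
    MeasurableSpace Ω :=
  MeasurableSpace.comap (fun ω => (X ω, T ω)) inferInstance

/-!
Since `E[δ | X, T] = 0`, the noise `δ` is conditionally orthogonal given `X` to every
`σ(X, T)`-measurable variable, in particular to `T` and to `E[T | X]`. Hence
`W - E[W | X] = φ(X) (T - E[T | X]) + δ`, and the conditional covariance of `W` and `T` given
`X` is `φ(X)` times the conditional variance of `T`. So the known-link estimand with slope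
`α_mis` is `α_mis(X) φ(X)` instead of `α⋆(X) φ(X)`.
-/

namespace MeasureTheory

variable {Ω : Type*} {m m₂ m₀ : MeasurableSpace Ω} {μ : Measure[m₀] Ω}

lemma condExp_ae_eq_zero_of_le {E : Type*} [NormedAddCommGroup E] [NormedSpace ℝ E]
    [CompleteSpace E] (hm : m ≤ m₂) (hm₂ : m₂ ≤ m₀) [SigmaFinite (μ.trim hm₂)] {f : Ω → E}
    (hf : μ[f | m₂] =ᵐ[μ] 0) : μ[f | m] =ᵐ[μ] 0 :=
  calc μ[f | m] =ᵐ[μ] μ[μ[f | m₂] | m] := (condExp_condExp_of_le hm hm₂).symm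
    _ =ᵐ[μ] μ[0 | m] := condExp_congr_ae hf
    _ = 0 := condExp_zero

lemma condExp_mul_ae_eq_zero_of_condExp_ae_eq_zero (hm : m ≤ m₂) (hm₂ : m₂ ≤ m₀)
    [SigmaFinite (μ.trim hm₂)] {g h : Ω → ℝ} (hg : AEStronglyMeasurable[m₂] g μ)
    (hgh : Integrable (g * h) μ) (hh : Integrable h μ) (hh₀ : μ[h | m₂] =ᵐ[μ] 0) :
    μ[g * h | m] =ᵐ[μ] 0 :=
  condExp_ae_eq_zero_of_le hm hm₂ <| by
    filter_upwards [condExp_mul_of_aestronglyMeasurable_left hg hgh hh, hh₀] with ω hω hω₀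
    simp [hω, hω₀]

section PartiallyLinear

variable [IsFiniteMeasure μ] {a b T δ W : Ω → ℝ} (hm : m ≤ m₂) (hm₂ : m₂ ≤ m₀)
  (ha : StronglyMeasurable[m] a) (hb : StronglyMeasurable[m] b)
  (hW : ∀ ω, W ω = a ω * T ω + b ω + δ ω) (hδ₀ : μ[δ | m₂] =ᵐ[μ] 0)
include hm hm₂ ha hb hW hδ₀

lemma condExp_partiallyLinear (haT : Integrable (a * T) μ) (hT : Integrable T μ)
    (hb_int : Integrable b μ) (hδ : Integrable δ μ) :
    μ[W | m] =ᵐ[μ] a * μ[T | m] + b := by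
  obtain rfl : W = a * T + b + δ := funext hW
  have hb_eq : μ[b | m] = b := condExp_of_stronglyMeasurable (hm.trans hm₂) hb hb_int
  filter_upwards [condExp_add (haT.add hb_int) hδ m, condExp_add haT hb_int m,
    condExp_mul_of_stronglyMeasurable_left ha haT hT,
    condExp_ae_eq_zero_of_le hm hm₂ hδ₀] with ω h₁ h₂ h₃ h₄
  simp only [Pi.add_apply, Pi.mul_apply, Pi.zero_apply, hb_eq] at h₁ h₂ h₃ h₄ ⊢
  rw [h₁, h₂, h₃, h₄, add_zero]

lemma condExp_centered_mul_centered_partiallyLinear (hT : MemLp T 2 μ)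
    (hTm : StronglyMeasurable[m₂] T) (hb_int : Integrable b μ) (hδ : MemLp δ 2 μ) {C : ℝ}
    (ha_bdd : ∀ᵐ ω ∂μ, ‖a ω‖ ≤ C) :
    μ[(W - μ[W | m]) * (T - μ[T | m]) | m] =ᵐ[μ] a * Var[T; μ | m] := by
  set Tc := T - μ[T | m]
  have ha_ae : AEStronglyMeasurable a μ := (ha.mono (hm.trans hm₂)).aestronglyMeasurable
  have hTc : MemLp Tc 2 μ := hT.sub (hT.condExp one_le_two)
  have hTcm : AEStronglyMeasurable[m₂] Tc μ :=
    (hTm.sub (stronglyMeasurable_condExp.mono hm)).aestronglyMeasurable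
  have haTc2 : Integrable (a * Tc ^ 2) μ := hTc.integrable_sq.bdd_mul ha_ae ha_bdd
  have hTcδ : Integrable (Tc * δ) μ := hTc.integrable_mul hδ
  have hW_centered : W - μ[W | m] =ᵐ[μ] a * Tc + δ := by
    filter_upwards [condExp_partiallyLinear hm hm₂ ha hb hW hδ₀
      ((hT.integrable one_le_two).bdd_mul ha_ae ha_bdd) (hT.integrable one_le_two) hb_int
      (hδ.integrable one_le_two)] with ω hω
    simp only [Pi.sub_apply, Pi.add_apply, Pi.mul_apply, hW ω, hω, Tc]
    ring
  calc μ[(W - μ[W | m]) * Tc | m]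
      =ᵐ[μ] μ[a * Tc ^ 2 + Tc * δ | m] := condExp_congr_ae <| by
        filter_upwards [hW_centered] with ω hω
        simp only [Pi.mul_apply, Pi.add_apply, Pi.pow_apply, hω]
        ring
    _ =ᵐ[μ] μ[a * Tc ^ 2 | m] + μ[Tc * δ | m] := condExp_add haTc2 hTcδ m
    _ =ᵐ[μ] a * Var[T; μ | m] + 0 := by
      refine (condExp_mul_of_stronglyMeasurable_left ha haTc2 hTc.integrable_sq).add ?_
      exact condExp_mul_ae_eq_zero_of_condExp_ae_eq_zero hm hm₂ hTcm hTcδ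
        (hδ.integrable one_le_two) hδ₀
    _ = a * Var[T; μ | m] := add_zero _

lemma condExp_centered_mul_centered_div_condVar_partiallyLinear (hT : MemLp T 2 μ)
    (hTm : StronglyMeasurable[m₂] T) (hb_int : Integrable b μ) (hδ : MemLp δ 2 μ) {C : ℝ}
    (ha_bdd : ∀ᵐ ω ∂μ, ‖a ω‖ ≤ C) (hv : ∀ᵐ ω ∂μ, Var[T; μ | m] ω ≠ 0) :
    ∀ᵐ ω ∂μ, μ[(W - μ[W | m]) * (T - μ[T | m]) | m] ω / Var[T; μ | m] ω = a ω := by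
  filter_upwards [condExp_centered_mul_centered_partiallyLinear hm hm₂ ha hb hW hδ₀ hT hTm
    hb_int hδ ha_bdd, hv] with ω hω hvω
  rw [hω, Pi.mul_apply, mul_div_cancel_right₀ _ hvω]

end PartiallyLinear

end MeasureTheory

theorem known_link_misspecification_bias_general
    {Ω 𝒳 : Type*} [MeasurableSpace Ω] [MeasurableSpace 𝒳]
    (P : Measure Ω) [IsProbabilityMeasure P]
    (X : Ω → 𝒳) (hX : Measurable X)
    (T : Ω → ℝ) (hT : Measurable T) (hT2 : MemLp T 2 P)
    (φ f : 𝒳 → ℝ) (hφ : Measurable φ) (hf : Measurable f)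
    (Cφ : ℝ) (hφbdd : ∀ ω, |φ (X ω)| ≤ Cφ)
    (hfX2 : MemLp (fun ω => f (X ω)) 2 P)
    (δ : Ω → ℝ) (hδ2 : MemLp δ 2 P)
    (hδmean : P[δ | sigmaGen₂ X T] =ᵐ[P] 0)
    (W : Ω → ℝ) (hWdef : ∀ ω, W ω = φ (X ω) * T ω + f (X ω) + δ ω)
    (αstar αmis : 𝒳 → ℝ)
    (hαstar_ne : ∀ x, αstar x ≠ 0)
    (θ : 𝒳 → ℝ) (hθdef : ∀ x, θ x = αstar x * φ x)
    (hvpos : ∀ᵐ ω ∂P, 0 < (P[fun ω' => (T ω' - (P[T | sigmaGen X]) ω') ^ 2 | sigmaGen X]) ω) :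
    ∀ᵐ ω ∂P,
      αmis (X ω)
          * (P[fun ω' => (W ω' - (P[W | sigmaGen X]) ω')
                * (T ω' - (P[T | sigmaGen X]) ω') | sigmaGen X]) ω
          / (P[fun ω' => (T ω' - (P[T | sigmaGen X]) ω') ^ 2 | sigmaGen X]) ω
        - θ (X ω)
      = ((αmis (X ω) - αstar (X ω)) / αstar (X ω)) * θ (X ω) := by
  have hpair : Measurable[sigmaGen₂ X T] fun ω => (X ω, T ω) := comap_measurable _
  have hXm : Measurable[sigmaGen X] X := comap_measurable X
  have hslope := condExp_centered_mul_centered_div_condVar_partiallyLinear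
    (measurable_fst.comp hpair).comap_le (hX.prodMk hT).comap_le
    (hφ.comp hXm).stronglyMeasurable (hf.comp hXm).stronglyMeasurable hWdef hδmean hT2
    (measurable_snd.comp hpair).stronglyMeasurable (hfX2.integrable one_le_two) hδ2
    (ae_of_all _ hφbdd) (hvpos.mono fun _ hv => hv.ne')
  filter_upwards [hslope] with ω hω
  calc _ = αmis (X ω) * φ (X ω) - θ (X ω) := by
        rw [mul_div_assoc]
        exact congrArg (fun r => αmis (X ω) * r - θ (X ω)) hω
    _ = _ := by
        rw [hθdef]
        field_simp [hαstar_ne (X ω)]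

/-- **Misspecification bias of the known-link estimator.**
If `W = φ(X)·T + f(X) + δ` with `E[δ | σ(X,T)] = 0` a.s., the true link slope `α⋆` is
nowhere zero, `θ(x) = α⋆(x)·φ(x)`, and the conditional variance of `T` given `σ(X)` is
a.s. positive, then the population limit of the known-link estimator computed with a
misspecified slope `α_mis` differs from `θ(X)` by the conditional bias
`B(X) = ((α_mis(X) - α⋆(X))/α⋆(X))·θ(X)` almost surely. -/
theorem known_link_misspecification_bias
    {Ω 𝒳 : Type*} [MeasurableSpace Ω] [MeasurableSpace 𝒳]
    (P : Measure Ω) [IsProbabilityMeasure P]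
    (X : Ω → 𝒳) (hX : Measurable X)
    (T : Ω → ℝ) (hT : Measurable T) (hT2 : MemLp T 2 P)
    (φ f : 𝒳 → ℝ) (hφ : Measurable φ) (hf : Measurable f)
    (Cφ : ℝ) (hφbdd : ∀ ω, |φ (X ω)| ≤ Cφ)
    (hfX2 : MemLp (fun ω => f (X ω)) 2 P)
    (δ : Ω → ℝ) (hδ2 : MemLp δ 2 P)
    (hδmean : P[δ | sigmaGen₂ X T] =ᵐ[P] 0)
    (W : Ω → ℝ) (hWdef : ∀ ω, W ω = φ (X ω) * T ω + f (X ω) + δ ω)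
    (αstar αmis : 𝒳 → ℝ) (hαstar : Measurable αstar) (hαmis : Measurable αmis)
    (hαstar_ne : ∀ x, αstar x ≠ 0)
    (θ : 𝒳 → ℝ) (hθdef : ∀ x, θ x = αstar x * φ x)
    (hvpos : ∀ᵐ ω ∂P, 0 < (P[fun ω' => (T ω' - (P[T | sigmaGen X]) ω') ^ 2 | sigmaGen X]) ω) :
    ∀ᵐ ω ∂P,
      αmis (X ω)
          * (P[fun ω' => (W ω' - (P[W | sigmaGen X]) ω')
                * (T ω' - (P[T | sigmaGen X]) ω') | sigmaGen X]) ω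
          / (P[fun ω' => (T ω' - (P[T | sigmaGen X]) ω') ^ 2 | sigmaGen X]) ω
        - θ (X ω)
      = ((αmis (X ω) - αstar (X ω)) / αstar (X ω)) * θ (X ω) :=
  known_link_misspecification_bias_general P X hX T hT hT2 φ f hφ hf Cφ hφbdd hfX2 δ hδ2 hδmean W
    hWdef αstar αmis hαstar_ne θ hθdef hvpos
end
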